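/- Let κ,ε>0, λ≥0, and M>0, and let ρ : [0,1] → ℝ be differentiable with continuous derivative ρ_x satisfying 0 < |ρ_x(x)| ≤ M on [0,1]. Let θ ∈ L²(0,1) and suppose u : [0,1] → ℝ satisfies Bu = θ, where u/ρ_x is four times continuously differentiable, u(0)=u(1)=0 and (u/ρ_x)''(0)=(u/ρ_x)''(1)=0. Then 0 ≤ ∫₀¹ θ u dx ≤ (M²/(M²+κ)) ∫₀¹ θ² dx; consequently ∫₀¹ θ² dx − ∫₀¹ θ u dx ≥ (κ/(M²+κ)) ∫₀¹ θ² dx > 0 whenever θ ≠ 0, i.e., the Hessian operator I − B^{-1} is positive definite. -/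

import Mathlib

open MeasureTheory Set intervalIntegral

/-!
With `w = u / ρ_x`, the equation `Bu = θ` gives `θ u = ε w w'''' − λ w w'' + (κ + ρ_x²) w²`.
Two integrations by parts, whose boundary terms vanish because `w = w'' = 0` at the endpoints,
turn this into `∫ θ u = ε ∫ (w'')² + λ ∫ (w')² + ∫ (κ + ρ_x²) w² ≥ ∫ (κ + ρ_x²) w² ≥ 0`.
Since `ρ_x² ≤ M²`, `∫ u² = ∫ ρ_x² w² ≤ M²/(M²+κ) ∫ (κ + ρ_x²) w² ≤ M²/(M²+κ) ∫ θ u`;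
together with Cauchy–Schwarz, `(∫ θ u)² ≤ ∫ θ² ∫ u²`, this yields `∫ θ u ≤ M²/(M²+κ) ∫ θ²`.
-/

/-- The operator `B` associated with the HV Hessian:
`Bv = (1/ρ_x)[ε (v/ρ_x)'''' − λ (v/ρ_x)'' + (v/ρ_x)(κ + ρ_x²)]`,
where `ρx` denotes the derivative `ρ_x`. -/
noncomputable def Bop (κ lam ε : ℝ) (ρx : ℝ → ℝ) (v : ℝ → ℝ) (x : ℝ) : ℝ :=
  (1 / ρx x) * (ε * iteratedDeriv 4 (fun y => v y / ρx y) x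
    - lam * iteratedDeriv 2 (fun y => v y / ρx y) x
    + (v x / ρx x) * (κ + (ρx x) ^ 2))

theorem sq_integral_mul_le_integral_sq_mul_integral_sq {α : Type*} [MeasurableSpace α]
    {μ : Measure α} {f g : α → ℝ} (hf : MemLp f 2 μ) (hg : MemLp g 2 μ) :
    (∫ x, f x * g x ∂μ) ^ 2 ≤ (∫ x, f x ^ 2 ∂μ) * ∫ x, g x ^ 2 ∂μ := by
  have hf2 := hf.integrable_sq
  have hg2 := hg.integrable_sq
  have hfg : Integrable (fun x => f x * g x) μ := hf.integrable_mul hg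
  have hquad : ∀ t : ℝ, 0 ≤ (∫ x, g x ^ 2 ∂μ) * (t * t) + (-2 * ∫ x, f x * g x ∂μ) * t
      + ∫ x, f x ^ 2 ∂μ := by
    intro t
    have hexpand : ∫ x, (f x - t * g x) ^ 2 ∂μ
        = ∫ x, f x ^ 2 ∂μ - 2 * t * ∫ x, f x * g x ∂μ + t ^ 2 * ∫ x, g x ^ 2 ∂μ := by
      calc ∫ x, (f x - t * g x) ^ 2 ∂μ
          = ∫ x, (f x ^ 2 - 2 * t * (f x * g x) + t ^ 2 * g x ^ 2) ∂μ :=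
            integral_congr_ae (ae_of_all _ fun x => by ring)
        _ = _ := by
            have hcross : Integrable (fun x => 2 * t * (f x * g x)) μ := hfg.const_mul _
            have hdiff : Integrable (fun x => f x ^ 2 - 2 * t * (f x * g x)) μ := hf2.sub hcross
            rw [integral_add hdiff (hg2.const_mul _), integral_sub hf2 hcross,
              MeasureTheory.integral_const_mul, MeasureTheory.integral_const_mul]
    have hnonneg : 0 ≤ ∫ x, (f x - t * g x) ^ 2 ∂μ := integral_nonneg fun x => sq_nonneg _
    linarith
  have hdisc := discrim_le_zero hquad
  rw [discrim] at hdisc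
  linarith

theorem integral_sq_pos_of_not_ae_eq_zero {α : Type*} [MeasurableSpace α] {μ : Measure α}
    {f : α → ℝ} (hf : MemLp f 2 μ) (h : ¬ f =ᵐ[μ] 0) : 0 < ∫ x, f x ^ 2 ∂μ := by
  refine (integral_nonneg fun x => sq_nonneg (f x)).lt_of_ne fun hzero => h ?_
  filter_upwards [(integral_eq_zero_iff_of_nonneg (fun x => sq_nonneg (f x))
    hf.integrable_sq).1 hzero.symm] with x hx
  exact pow_eq_zero_iff two_ne_zero |>.1 hx

theorem intervalIntegral.integral_congr_Ioo {a b : ℝ} {f g : ℝ → ℝ} (hab : a ≤ b)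
    (h : EqOn f g (Ioo a b)) : ∫ x in a..b, f x = ∫ x in a..b, g x := by
  simp only [integral_of_le hab, integral_Ioc_eq_integral_Ioo]
  exact setIntegral_congr_fun measurableSet_Ioo h

section IntegrationByParts

variable {a b : ℝ} {f g w : ℝ → ℝ}

theorem integral_mul_deriv_eq_neg_of_boundary (hf : ContDiff ℝ 1 f) (hg : ContDiff ℝ 1 g)
    (hbdry : f a * g a = f b * g b) :
    ∫ x in a..b, f x * deriv g x = -∫ x in a..b, deriv f x * g x := by
  rw [integral_mul_deriv_eq_deriv_mul
    (fun x _ => (hf.differentiable one_ne_zero x).hasDerivAt)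
    (fun x _ => (hg.differentiable one_ne_zero x).hasDerivAt)
    ((hf.continuous_deriv le_rfl).intervalIntegrable a b)
    ((hg.continuous_deriv le_rfl).intervalIntegrable a b), hbdry]
  ring

theorem integral_mul_iteratedDeriv_two_eq (hw : ContDiff ℝ 2 w) (ha : w a = 0) (hb : w b = 0) :
    ∫ x in a..b, w x * iteratedDeriv 2 w x = -∫ x in a..b, deriv w x ^ 2 := by
  simp only [iteratedDeriv_eq_iterate, Function.iterate_succ_apply, Function.iterate_zero_apply,
    sq]
  exact integral_mul_deriv_eq_neg_of_boundary (hw.of_le (by norm_num))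
    (hw.iterate_deriv' 1 1) (by simp [ha, hb])

theorem integral_mul_iteratedDeriv_four_eq (hw : ContDiff ℝ 4 w) (ha : w a = 0) (hb : w b = 0)
    (h2a : iteratedDeriv 2 w a = 0) (h2b : iteratedDeriv 2 w b = 0) :
    ∫ x in a..b, w x * iteratedDeriv 4 w x = ∫ x in a..b, iteratedDeriv 2 w x ^ 2 := by
  have hw1 : ContDiff ℝ 1 (deriv w) := (hw.of_le (by norm_num)).iterate_deriv' 1 1
  have hw2 : ContDiff ℝ 1 (deriv (deriv w)) := (hw.of_le (by norm_num)).iterate_deriv' 1 2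
  have hw3 : ContDiff ℝ 1 (deriv (deriv (deriv w))) := (hw.of_le (by norm_num)).iterate_deriv' 1 3
  simp only [iteratedDeriv_eq_iterate, Function.iterate_succ_apply, Function.iterate_zero_apply,
    sq] at h2a h2b ⊢
  rw [integral_mul_deriv_eq_neg_of_boundary (hw.of_le (by norm_num)) hw3 (by simp [ha, hb]),
    integral_mul_deriv_eq_neg_of_boundary hw1 hw2 (by simp [h2a, h2b]), neg_neg]

theorem integral_fourthOrder_form_eq {ε lam : ℝ} {q : ℝ → ℝ} (hq : Continuous q)
    (hw : ContDiff ℝ 4 w) (ha : w a = 0) (hb : w b = 0)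
    (h2a : iteratedDeriv 2 w a = 0) (h2b : iteratedDeriv 2 w b = 0) :
    ∫ x in a..b, (ε * (w x * iteratedDeriv 4 w x) - lam * (w x * iteratedDeriv 2 w x)
        + q x * w x ^ 2)
      = ε * (∫ x in a..b, iteratedDeriv 2 w x ^ 2) + lam * (∫ x in a..b, deriv w x ^ 2)
        + ∫ x in a..b, q x * w x ^ 2 := by
  have hw0 : Continuous w := hw.continuous
  have hw2 : Continuous (iteratedDeriv 2 w) := hw.continuous_iteratedDeriv 2 (by norm_num)
  have hw4 : Continuous (iteratedDeriv 4 w) := hw.continuous_iteratedDeriv 4 le_rfl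
  have i4 : IntervalIntegrable (fun x => ε * (w x * iteratedDeriv 4 w x)) volume a b :=
    (by fun_prop : Continuous _).intervalIntegrable a b
  have i2 : IntervalIntegrable (fun x => lam * (w x * iteratedDeriv 2 w x)) volume a b :=
    (by fun_prop : Continuous _).intervalIntegrable a b
  have i0 : IntervalIntegrable (fun x => q x * w x ^ 2) volume a b :=
    (by fun_prop : Continuous _).intervalIntegrable a b
  rw [integral_add (i4.sub i2) i0, integral_sub i4 i2, intervalIntegral.integral_const_mul,
    intervalIntegral.integral_const_mul, integral_mul_iteratedDeriv_four_eq hw ha hb h2a h2b,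
    integral_mul_iteratedDeriv_two_eq (hw.of_le (by norm_num)) ha hb]
  ring

end IntegrationByParts

theorem Bop_mul_eq {κ lam ε x : ℝ} {ρx u : ℝ → ℝ} (hx : ρx x ≠ 0) :
    Bop κ lam ε ρx u x * u x
      = ε * (u x / ρx x * iteratedDeriv 4 (fun y => u y / ρx y) x)
        - lam * (u x / ρx x * iteratedDeriv 2 (fun y => u y / ρx y) x)
        + (κ + ρx x ^ 2) * (u x / ρx x) ^ 2 := by
  unfold Bop
  field_simp

theorem mul_sq_le_div_mul {κ M r w : ℝ} (hκ : 0 < κ) (hr : |r| ≤ M) :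
    (r * w) ^ 2 ≤ M ^ 2 / (M ^ 2 + κ) * ((κ + r ^ 2) * w ^ 2) := by
  have hr2 : r ^ 2 ≤ M ^ 2 := sq_le_sq' (abs_le.1 hr).1 (abs_le.1 hr).2
  rw [div_mul_eq_mul_div, le_div_iff₀ (by positivity)]
  nlinarith [mul_le_mul_of_nonneg_right hr2 (mul_nonneg hκ.le (sq_nonneg w))]

theorem le_mul_of_sq_le_mul_of_le_mul {A B C c : ℝ} (hB : 0 ≤ B) (hA : 0 ≤ A) (hc : 0 ≤ c)
    (hBAC : B ^ 2 ≤ A * C) (hC : C ≤ c * B) : B ≤ c * A := by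
  rcases hB.eq_or_lt with hzero | hpos
  · rw [← hzero]; positivity
  · exact le_of_mul_le_mul_right (by nlinarith [mul_le_mul_of_nonneg_left hC hA]) hpos

theorem ContinuousOn.memLp_two_restrict_Ioo {f : ℝ → ℝ} {a b : ℝ} (hf : ContinuousOn f (Icc a b)) :
    MemLp f 2 (volume.restrict (Ioo a b)) :=
  (memLp_two_iff_integrable_sq ((hf.mono Ioo_subset_Icc_self).aestronglyMeasurable
    measurableSet_Ioo)).2 (((hf.pow 2).integrableOn_Icc).mono_set Ioo_subset_Icc_self)

section EnergyEstimates

variable {κ lam ε M a b : ℝ} {ρx u θ : ℝ → ℝ}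

theorem continuousOn_of_continuous_div {s : Set ℝ} (hρx : Continuous ρx)
    (hne : ∀ x ∈ s, ρx x ≠ 0) (hw : Continuous fun x => u x / ρx x) : ContinuousOn u s :=
  (hρx.mul hw).continuousOn.congr fun x hx => (mul_div_cancel₀ (u x) (hne x hx)).symm

theorem integral_mul_eq_of_Bop_eq (hab : a ≤ b) (hρx : Continuous ρx)
    (hne : ∀ x ∈ Ioo a b, ρx x ≠ 0) (hw : ContDiff ℝ 4 fun x => u x / ρx x)
    (ha : u a = 0) (hb : u b = 0) (h2a : iteratedDeriv 2 (fun x => u x / ρx x) a = 0)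
    (h2b : iteratedDeriv 2 (fun x => u x / ρx x) b = 0)
    (hBu : ∀ x ∈ Ioo a b, Bop κ lam ε ρx u x = θ x) :
    ∫ x in a..b, θ x * u x
      = ε * (∫ x in a..b, iteratedDeriv 2 (fun x => u x / ρx x) x ^ 2)
        + lam * (∫ x in a..b, deriv (fun x => u x / ρx x) x ^ 2)
        + ∫ x in a..b, (κ + ρx x ^ 2) * (u x / ρx x) ^ 2 := by
  rw [← integral_fourthOrder_form_eq (q := fun x => κ + ρx x ^ 2) (by fun_prop) hw
    (by simp [ha]) (by simp [hb]) h2a h2b]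
  refine integral_congr_Ioo hab fun x hx => ?_
  rw [← hBu x hx, Bop_mul_eq (hne x hx)]

theorem integral_potential_le_integral_mul (hε : 0 ≤ ε) (hlam : 0 ≤ lam) (hab : a ≤ b)
    (hρx : Continuous ρx) (hne : ∀ x ∈ Ioo a b, ρx x ≠ 0) (hw : ContDiff ℝ 4 fun x => u x / ρx x)
    (ha : u a = 0) (hb : u b = 0) (h2a : iteratedDeriv 2 (fun x => u x / ρx x) a = 0)
    (h2b : iteratedDeriv 2 (fun x => u x / ρx x) b = 0)
    (hBu : ∀ x ∈ Ioo a b, Bop κ lam ε ρx u x = θ x) :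
    ∫ x in a..b, (κ + ρx x ^ 2) * (u x / ρx x) ^ 2 ≤ ∫ x in a..b, θ x * u x := by
  rw [integral_mul_eq_of_Bop_eq hab hρx hne hw ha hb h2a h2b hBu]
  have h2 : 0 ≤ ∫ x in a..b, iteratedDeriv 2 (fun x => u x / ρx x) x ^ 2 :=
    integral_nonneg hab fun x _ => sq_nonneg _
  have h1 : 0 ≤ ∫ x in a..b, deriv (fun x => u x / ρx x) x ^ 2 :=
    integral_nonneg hab fun x _ => sq_nonneg _
  nlinarith [mul_nonneg hε h2, mul_nonneg hlam h1]

theorem integral_sq_le_mul_integral_potential (hκ : 0 < κ) (hab : a ≤ b) (hρx : Continuous ρx)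
    (hne : ∀ x ∈ Icc a b, ρx x ≠ 0) (hM : ∀ x ∈ Icc a b, |ρx x| ≤ M)
    (hw : Continuous fun x => u x / ρx x) :
    ∫ x in a..b, u x ^ 2
      ≤ M ^ 2 / (M ^ 2 + κ) * ∫ x in a..b, (κ + ρx x ^ 2) * (u x / ρx x) ^ 2 := by
  rw [← intervalIntegral.integral_const_mul]
  refine integral_mono_on hab
    (((continuousOn_of_continuous_div hρx hne hw).pow 2).intervalIntegrable_of_Icc hab)
    ((by fun_prop : Continuous _).intervalIntegrable a b) fun x hx => ?_
  calc u x ^ 2 = (ρx x * (u x / ρx x)) ^ 2 := by field_simp [hne x hx]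
    _ ≤ _ := mul_sq_le_div_mul hκ (hM x hx)

end EnergyEstimates

theorem hessian_positive_definite_general
    (κ lam ε M : ℝ) (hκ : 0 < κ) (hlam : 0 ≤ lam) (hε : 0 < ε)
    (ρ : ℝ → ℝ) (hρx : Continuous (deriv ρ))
    (hbnd : ∀ x ∈ Icc (0:ℝ) 1, 0 < |deriv ρ x| ∧ |deriv ρ x| ≤ M)
    (θ : ℝ → ℝ) (hθ : MemLp θ 2 (volume.restrict (Ioo (0:ℝ) 1)))
    (u : ℝ → ℝ) (hu : ContDiff ℝ 4 (fun x => u x / deriv ρ x))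
    (hu0 : u 0 = 0) (hu1 : u 1 = 0)
    (hu''0 : iteratedDeriv 2 (fun x => u x / deriv ρ x) 0 = 0)
    (hu''1 : iteratedDeriv 2 (fun x => u x / deriv ρ x) 1 = 0)
    (hBu : ∀ x ∈ Ioo (0:ℝ) 1, Bop κ lam ε (deriv ρ) u x = θ x) :
    (0 ≤ ∫ x in (0:ℝ)..1, θ x * u x) ∧
    ((∫ x in (0:ℝ)..1, θ x * u x)
        ≤ M ^ 2 / (M ^ 2 + κ) * ∫ x in (0:ℝ)..1, (θ x) ^ 2) ∧
    (¬ (θ =ᵐ[volume.restrict (Ioo (0:ℝ) 1)] 0) →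
      (κ / (M ^ 2 + κ) * ∫ x in (0:ℝ)..1, (θ x) ^ 2)
          ≤ (∫ x in (0:ℝ)..1, (θ x) ^ 2) - (∫ x in (0:ℝ)..1, θ x * u x) ∧
      0 < (∫ x in (0:ℝ)..1, (θ x) ^ 2) - (∫ x in (0:ℝ)..1, θ x * u x)) := by
  have hne : ∀ x ∈ Icc (0:ℝ) 1, deriv ρ x ≠ 0 := fun x hx => abs_pos.1 (hbnd x hx).1
  have hI : ∀ f : ℝ → ℝ, ∫ x in (0:ℝ)..1, f x = ∫ x in Ioo (0:ℝ) 1, f x := fun f => by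
    rw [integral_of_le zero_le_one, integral_Ioc_eq_integral_Ioo]
  have hc : 0 ≤ M ^ 2 / (M ^ 2 + κ) := by positivity
  have hpot_nonneg : 0 ≤ ∫ x in (0:ℝ)..1, (κ + deriv ρ x ^ 2) * (u x / deriv ρ x) ^ 2 :=
    integral_nonneg zero_le_one fun x _ => by positivity
  have hpot_le := integral_potential_le_integral_mul hε.le hlam zero_le_one hρx
    (fun x hx => hne x (Ioo_subset_Icc_self hx)) hu hu0 hu1 hu''0 hu''1 hBu
  have hu_sq := integral_sq_le_mul_integral_potential hκ zero_le_one hρx hne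
    (fun x hx => (hbnd x hx).2) hu.continuous
  have hCS : (∫ x in (0:ℝ)..1, θ x * u x) ^ 2
      ≤ (∫ x in (0:ℝ)..1, θ x ^ 2) * ∫ x in (0:ℝ)..1, u x ^ 2 := by
    simpa only [hI] using sq_integral_mul_le_integral_sq_mul_integral_sq hθ
      (continuousOn_of_continuous_div hρx hne hu.continuous).memLp_two_restrict_Ioo
  have hθu_le := le_mul_of_sq_le_mul_of_le_mul (hpot_nonneg.trans hpot_le)
    (integral_nonneg zero_le_one fun x _ => sq_nonneg (θ x)) hc hCS
    (hu_sq.trans (mul_le_mul_of_nonneg_left hpot_le hc))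
  refine ⟨hpot_nonneg.trans hpot_le, hθu_le, fun hθ0 => ?_⟩
  have hθ_pos : 0 < ∫ x in (0:ℝ)..1, θ x ^ 2 := hI _ ▸ integral_sq_pos_of_not_ae_eq_zero hθ hθ0
  have hcompl : κ / (M ^ 2 + κ) = 1 - M ^ 2 / (M ^ 2 + κ) := by field_simp; ring
  rw [hcompl]
  constructor <;> nlinarith [div_pos hκ (show 0 < M ^ 2 + κ by positivity)]

/-- Positive definiteness of the Hessian operator `I − B⁻¹`:
if `Bu = θ` (with the boundary conditions of `B`) and `0 < |ρ_x| ≤ M` on `[0,1]`,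
then `0 ≤ ∫₀¹ θ u ≤ (M²/(M²+κ)) ∫₀¹ θ²`; consequently, whenever `θ ≠ 0` (in `L²(0,1)`),
`∫₀¹ θ² − ∫₀¹ θ u ≥ (κ/(M²+κ)) ∫₀¹ θ² > 0`. -/
theorem hessian_positive_definite
    (κ lam ε M : ℝ) (hκ : 0 < κ) (hlam : 0 ≤ lam) (hε : 0 < ε) (hM : 0 < M)
    (ρ : ℝ → ℝ) (hρ : Differentiable ℝ ρ) (hρx : Continuous (deriv ρ))
    (hbnd : ∀ x ∈ Icc (0:ℝ) 1, 0 < |deriv ρ x| ∧ |deriv ρ x| ≤ M)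
    (θ : ℝ → ℝ) (hθ : MemLp θ 2 (volume.restrict (Ioo (0:ℝ) 1)))
    (u : ℝ → ℝ) (hu : ContDiff ℝ 4 (fun x => u x / deriv ρ x))
    (hu0 : u 0 = 0) (hu1 : u 1 = 0)
    (hu''0 : iteratedDeriv 2 (fun x => u x / deriv ρ x) 0 = 0)
    (hu''1 : iteratedDeriv 2 (fun x => u x / deriv ρ x) 1 = 0)
    (hBu : ∀ x ∈ Ioo (0:ℝ) 1, Bop κ lam ε (deriv ρ) u x = θ x) :
    (0 ≤ ∫ x in (0:ℝ)..1, θ x * u x) ∧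
    ((∫ x in (0:ℝ)..1, θ x * u x)
        ≤ M ^ 2 / (M ^ 2 + κ) * ∫ x in (0:ℝ)..1, (θ x) ^ 2) ∧
    (¬ (θ =ᵐ[volume.restrict (Ioo (0:ℝ) 1)] 0) →
      (κ / (M ^ 2 + κ) * ∫ x in (0:ℝ)..1, (θ x) ^ 2)
          ≤ (∫ x in (0:ℝ)..1, (θ x) ^ 2) - (∫ x in (0:ℝ)..1, θ x * u x) ∧
      0 < (∫ x in (0:ℝ)..1, (θ x) ^ 2) - (∫ x in (0:ℝ)..1, θ x * u x)) :=
  hessian_positive_definite_general κ lam ε M hκ hlam hε ρ hρx hbnd θ hθ u hu hu0 hu1 hu''0 hu''1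
    hBu
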